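/- There is a linear-size translation from coSafetyFO to EBFO: there exists a constant C > 0 such that for every coSafetyFO formula φ(x) with exactly one free variable there exists an EBFO sentence φ' such that L(φ(x)) = L(φ') and |φ'| ≤ C·|φ(x)|. -/

import Mathlib

/-!
Relativizing every quantifier of `φ` to the positions `≤ x` expresses that `φ` holds on the
finite prefix `σ[0, x]`, at the cost of a constant factor in size. A coSafetyFO formula holds
on an infinite word iff it holds on every long enough finite prefix: its existential
quantifiers need only finitely many witnesses, and its universal quantifiers are already
bounded above by a variable. Hence `∃x φ^{≤x}` defines `L(φ(z))`, once `z` is bound and pinned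
to position `0` by a bounded formula of constant size.
-/

namespace CoSafetyPaper

/-- LTL formulas in negation normal form over proposition letters `PL`. -/
inductive LTLF (PL : Type) : Type
  | pos : PL → LTLF PL                      -- p
  | nneg : PL → LTLF PL                     -- ¬p
  | disj : LTLF PL → LTLF PL → LTLF PL      -- φ ∨ ψ
  | conj : LTLF PL → LTLF PL → LTLF PL      -- φ ∧ ψ
  | next : LTLF PL → LTLF PL                -- X φ
  | wnext : LTLF PL → LTLF PL               -- wX φ
  | untl : LTLF PL → LTLF PL → LTLF PL      -- φ U ψ
  | rel : LTLF PL → LTLF PL → LTLF PL       -- φ R ψ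

/-- Satisfaction of an LTL formula by a word given as `σ : ℕ → Set PL`
together with a length `L : ℕ∞` (`⊤` for infinite words), at position `i`. -/
def Sat {PL : Type} (σ : ℕ → Set PL) (L : ℕ∞) : LTLF PL → ℕ → Prop
  | .pos p, i => p ∈ σ i
  | .nneg p, i => p ∉ σ i
  | .disj φ ψ, i => Sat σ L φ i ∨ Sat σ L ψ i
  | .conj φ ψ, i => Sat σ L φ i ∧ Sat σ L ψ i
  | .next φ, i => ((i + 1 : ℕ) : ℕ∞) < L ∧ Sat σ L φ (i + 1)
  | .wnext φ, i => ((i + 1 : ℕ) : ℕ∞) = L ∨ Sat σ L φ (i + 1)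
  | .untl φ ψ, i => ∃ j : ℕ, i ≤ j ∧ (j : ℕ∞) < L ∧ Sat σ L ψ j ∧
      ∀ k : ℕ, i ≤ k → k < j → Sat σ L φ k
  | .rel φ ψ, i =>
      (∀ j : ℕ, i ≤ j → (j : ℕ∞) < L → Sat σ L ψ j) ∨
      (∃ k : ℕ, i ≤ k ∧ (k : ℕ∞) < L ∧ Sat σ L φ k ∧
        ∀ j : ℕ, i ≤ j → j ≤ k → Sat σ L ψ j)

/-- The function `ℕ → Set PL` associated with a finite word (a list of letters). -/
def wordOf {PL : Type} (xs : List (Set PL)) : ℕ → Set PL := fun n => xs.getD n ∅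

/-- Satisfaction over a finite word. -/
def FinSat {PL : Type} (xs : List (Set PL)) (φ : LTLF PL) (i : ℕ) : Prop :=
  Sat (wordOf xs) (xs.length : ℕ∞) φ i

/-- `L_fin(φ)`: the nonempty finite words satisfying `φ` (at position 0). -/
def LfinL {PL : Type} (φ : LTLF PL) : Set (List (Set PL)) :=
  {xs | xs ≠ [] ∧ FinSat xs φ 0}

/-- `L(φ)`: the infinite words satisfying `φ` (at position 0). -/
def LinfL {PL : Type} (φ : LTLF PL) : Set (ℕ → Set PL) :=
  {σ | Sat σ ⊤ φ 0}

/-- `L·(2^Σ)^*` : concatenation of a language of finite words with all finite words. -/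
def catFin {PL : Type} (Lg : Set (List (Set PL))) : Set (List (Set PL)) :=
  {w | ∃ u ∈ Lg, ∃ v : List (Set PL), w = u ++ v}

/-- Concatenation of a finite word with an infinite word. -/
def listConc {PL : Type} (u : List (Set PL)) (v : ℕ → Set PL) : ℕ → Set PL :=
  fun n => if n < u.length then wordOf u n else v (n - u.length)

/-- `L·(2^Σ)^ω` : concatenation of a language of finite words with all infinite words. -/
def catInf {PL : Type} (Lg : Set (List (Set PL))) : Set (ℕ → Set PL) :=
  {w | ∃ u ∈ Lg, ∃ v : ℕ → Set PL, w = listConc u v}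

/-- The prefix `σ_[0,i]` of an infinite word, as a list. -/
def prefixList {PL : Type} (σ : ℕ → Set PL) (i : ℕ) : List (Set PL) :=
  (List.range (i + 1)).map σ

/-- co-safety ω-languages. -/
def IsCoSafetyLang {PL : Type} (Lg : Set (ℕ → Set PL)) : Prop :=
  ∀ σ ∈ Lg, ∃ i : ℕ, ∀ σ' : ℕ → Set PL, listConc (prefixList σ i) σ' ∈ Lg

/-- safety ω-languages. -/
def IsSafetyLang {PL : Type} (Lg : Set (ℕ → Set PL)) : Prop :=
  ∀ σ : ℕ → Set PL, σ ∉ Lg → ∃ i : ℕ, ∀ σ' : ℕ → Set PL, listConc (prefixList σ i) σ' ∉ Lg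

/-- co-safety languages of finite words. -/
def IsCoSafetyLangFin {PL : Type} (Lg : Set (List (Set PL))) : Prop :=
  (∀ σ ∈ Lg, σ ≠ []) ∧
  ∀ σ ∈ Lg, ∃ i < σ.length, ∀ σ' : List (Set PL), σ.take (i + 1) ++ σ' ∈ Lg

/-- safety languages of finite words. -/
def IsSafetyLangFin {PL : Type} (Lg : Set (List (Set PL))) : Prop :=
  (∀ σ ∈ Lg, σ ≠ []) ∧
  ∀ σ : List (Set PL), σ ≠ [] → σ ∉ Lg →
    ∃ i < σ.length, ∀ σ' : List (Set PL), σ.take (i + 1) ++ σ' ∉ Lg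

/-- coSafetyLTL: only X, wX and U as temporal operators. -/
inductive CoSafetyLTL {PL : Type} : LTLF PL → Prop
  | pos (p : PL) : CoSafetyLTL (.pos p)
  | nneg (p : PL) : CoSafetyLTL (.nneg p)
  | disj {φ ψ : LTLF PL} : CoSafetyLTL φ → CoSafetyLTL ψ → CoSafetyLTL (.disj φ ψ)
  | conj {φ ψ : LTLF PL} : CoSafetyLTL φ → CoSafetyLTL ψ → CoSafetyLTL (.conj φ ψ)
  | next {φ : LTLF PL} : CoSafetyLTL φ → CoSafetyLTL (.next φ)
  | wnext {φ : LTLF PL} : CoSafetyLTL φ → CoSafetyLTL (.wnext φ)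
  | untl {φ ψ : LTLF PL} : CoSafetyLTL φ → CoSafetyLTL ψ → CoSafetyLTL (.untl φ ψ)

/-- coSafetyLTL without the weak tomorrow operator: only X and U. -/
inductive CoSafetyLTLnoW {PL : Type} : LTLF PL → Prop
  | pos (p : PL) : CoSafetyLTLnoW (.pos p)
  | nneg (p : PL) : CoSafetyLTLnoW (.nneg p)
  | disj {φ ψ : LTLF PL} : CoSafetyLTLnoW φ → CoSafetyLTLnoW ψ → CoSafetyLTLnoW (.disj φ ψ)
  | conj {φ ψ : LTLF PL} : CoSafetyLTLnoW φ → CoSafetyLTLnoW ψ → CoSafetyLTLnoW (.conj φ ψ)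
  | next {φ : LTLF PL} : CoSafetyLTLnoW φ → CoSafetyLTLnoW (.next φ)
  | untl {φ ψ : LTLF PL} : CoSafetyLTLnoW φ → CoSafetyLTLnoW ψ → CoSafetyLTLnoW (.untl φ ψ)

/-- SafetyLTL: only X, wX and R as temporal operators. -/
inductive SafetyLTL {PL : Type} : LTLF PL → Prop
  | pos (p : PL) : SafetyLTL (.pos p)
  | nneg (p : PL) : SafetyLTL (.nneg p)
  | disj {φ ψ : LTLF PL} : SafetyLTL φ → SafetyLTL ψ → SafetyLTL (.disj φ ψ)
  | conj {φ ψ : LTLF PL} : SafetyLTL φ → SafetyLTL ψ → SafetyLTL (.conj φ ψ)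
  | next {φ : LTLF PL} : SafetyLTL φ → SafetyLTL (.next φ)
  | wnext {φ : LTLF PL} : SafetyLTL φ → SafetyLTL (.wnext φ)
  | rel {φ ψ : LTLF PL} : SafetyLTL φ → SafetyLTL ψ → SafetyLTL (.rel φ ψ)

/-- SafetyLTL without the tomorrow operator: only wX and R. -/
inductive SafetyLTLnoX {PL : Type} : LTLF PL → Prop
  | pos (p : PL) : SafetyLTLnoX (.pos p)
  | nneg (p : PL) : SafetyLTLnoX (.nneg p)
  | disj {φ ψ : LTLF PL} : SafetyLTLnoX φ → SafetyLTLnoX ψ → SafetyLTLnoX (.disj φ ψ)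
  | conj {φ ψ : LTLF PL} : SafetyLTLnoX φ → SafetyLTLnoX ψ → SafetyLTLnoX (.conj φ ψ)
  | wnext {φ : LTLF PL} : SafetyLTLnoX φ → SafetyLTLnoX (.wnext φ)
  | rel {φ ψ : LTLF PL} : SafetyLTLnoX φ → SafetyLTLnoX ψ → SafetyLTLnoX (.rel φ ψ)

/-- First-order formulas over words: signature `<`, `=`, and a unary predicate
for each proposition letter; variables are natural numbers. -/
inductive FOW (PL : Type) : Type
  | lt : ℕ → ℕ → FOW PL
  | eq : ℕ → ℕ → FOW PL
  | pred : PL → ℕ → FOW PL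
  | not : FOW PL → FOW PL
  | disj : FOW PL → FOW PL → FOW PL
  | conj : FOW PL → FOW PL → FOW PL
  | ex : ℕ → FOW PL → FOW PL
  | all : ℕ → FOW PL → FOW PL

/-- First-order satisfaction over a word `σ` with length `L : ℕ∞` (`⊤` for
infinite words) under a valuation `v` of the variables into positions. -/
def FOSat {PL : Type} (σ : ℕ → Set PL) (L : ℕ∞) : FOW PL → (ℕ → ℕ) → Prop
  | .lt x y, v => v x < v y
  | .eq x y, v => v x = v y
  | .pred p x, v => p ∈ σ (v x)
  | .not φ, v => ¬ FOSat σ L φ v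
  | .disj φ ψ, v => FOSat σ L φ v ∨ FOSat σ L ψ v
  | .conj φ ψ, v => FOSat σ L φ v ∧ FOSat σ L ψ v
  | .ex x φ, v => ∃ n : ℕ, (n : ℕ∞) < L ∧ FOSat σ L φ (Function.update v x n)
  | .all x φ, v => ∀ n : ℕ, (n : ℕ∞) < L → FOSat σ L φ (Function.update v x n)

/-- Free variables of a first-order formula. -/
def FOW.free {PL : Type} : FOW PL → Finset ℕ
  | .lt x y => {x, y}
  | .eq x y => {x, y}
  | .pred _ x => {x}
  | .not φ => φ.free
  | .disj φ ψ => φ.free ∪ ψ.free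
  | .conj φ ψ => φ.free ∪ ψ.free
  | .ex x φ => φ.free.erase x
  | .all x φ => φ.free.erase x

/-- `φ → ψ` as an abbreviation. -/
def FOW.impl {PL : Type} (φ ψ : FOW PL) : FOW PL := .disj (.not φ) ψ

/-- `y ≤ x` as an abbreviation. -/
def FOW.le {PL : Type} (y x : ℕ) : FOW PL := .disj (.lt y x) (.eq y x)

/-- The coSafetyFO fragment:
`φ ::= x<y | x=y | x≠y | P(x) | ¬P(x) | φ∨φ | φ∧φ | ∃y(x<y ∧ φ) | ∀y(x<y<z → φ)`. -/
inductive CoSafetyFO {PL : Type} : FOW PL → Prop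
  | lt (x y : ℕ) : CoSafetyFO (.lt x y)
  | eq (x y : ℕ) : CoSafetyFO (.eq x y)
  | ne (x y : ℕ) : CoSafetyFO (.not (.eq x y))
  | pred (p : PL) (x : ℕ) : CoSafetyFO (.pred p x)
  | npred (p : PL) (x : ℕ) : CoSafetyFO (.not (.pred p x))
  | disj {φ ψ : FOW PL} : CoSafetyFO φ → CoSafetyFO ψ → CoSafetyFO (.disj φ ψ)
  | conj {φ ψ : FOW PL} : CoSafetyFO φ → CoSafetyFO ψ → CoSafetyFO (.conj φ ψ)
  | ex (x y : ℕ) {φ : FOW PL} : CoSafetyFO φ →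
      CoSafetyFO (.ex y (.conj (.lt x y) φ))
  | all (x y z : ℕ) {φ : FOW PL} : CoSafetyFO φ →
      CoSafetyFO (.all y (FOW.impl (.conj (.lt x y) (.lt y z)) φ))

/-- The SafetyFO fragment:
`φ ::= x<y | x=y | x≠y | P(x) | ¬P(x) | φ∨φ | φ∧φ | ∃y(x<y<z ∧ φ) | ∀y(x<y → φ)`. -/
inductive SafetyFO {PL : Type} : FOW PL → Prop
  | lt (x y : ℕ) : SafetyFO (.lt x y)
  | eq (x y : ℕ) : SafetyFO (.eq x y)
  | ne (x y : ℕ) : SafetyFO (.not (.eq x y))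
  | pred (p : PL) (x : ℕ) : SafetyFO (.pred p x)
  | npred (p : PL) (x : ℕ) : SafetyFO (.not (.pred p x))
  | disj {φ ψ : FOW PL} : SafetyFO φ → SafetyFO ψ → SafetyFO (.disj φ ψ)
  | conj {φ ψ : FOW PL} : SafetyFO φ → SafetyFO ψ → SafetyFO (.conj φ ψ)
  | ex (x y z : ℕ) {φ : FOW PL} : SafetyFO φ →
      SafetyFO (.ex y (.conj (.conj (.lt x y) (.lt y z)) φ))
  | all (x y : ℕ) {φ : FOW PL} : SafetyFO φ →
      SafetyFO (.all y (FOW.impl (.lt x y) φ))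

/-- A formula has exactly one free variable. -/
def HasOneFree {PL : Type} (φ : FOW PL) : Prop := ∃ x : ℕ, φ.free = {x}

/-- `L_fin(φ(x))` for a first-order formula with (exactly one) free variable:
nonempty finite words that satisfy it with the free variable interpreted as `0`. -/
def LfinFO {PL : Type} (φ : FOW PL) : Set (List (Set PL)) :=
  {xs | xs ≠ [] ∧ FOSat (wordOf xs) (xs.length : ℕ∞) φ (fun _ => 0)}

/-- `L(φ(x))` for a first-order formula with (exactly one) free variable:
infinite words that satisfy it with the free variable interpreted as `0`. -/
def LinfFO {PL : Type} (φ : FOW PL) : Set (ℕ → Set PL) :=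
  {σ | FOSat σ ⊤ φ (fun _ => 0)}

/-- `⟦coSafetyFO⟧_fin`. -/
def CoSafetyFOFin (PL : Type) : Set (Set (List (Set PL))) :=
  {Lg | ∃ φ : FOW PL, CoSafetyFO φ ∧ HasOneFree φ ∧ Lg = LfinFO φ}

/-- `⟦coSafetyFO⟧`. -/
def CoSafetyFOInf (PL : Type) : Set (Set (ℕ → Set PL)) :=
  {Lg | ∃ φ : FOW PL, CoSafetyFO φ ∧ HasOneFree φ ∧ Lg = LinfFO φ}

/-- `⟦SafetyFO⟧_fin`. -/
def SafetyFOFin (PL : Type) : Set (Set (List (Set PL))) :=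
  {Lg | ∃ φ : FOW PL, SafetyFO φ ∧ HasOneFree φ ∧ Lg = LfinFO φ}

/-- `⟦FO⟧_fin` (formulas with exactly one free variable). -/
def FOFin (PL : Type) : Set (Set (List (Set PL))) :=
  {Lg | ∃ φ : FOW PL, HasOneFree φ ∧ Lg = LfinFO φ}

/-- `⟦coSafetyLTL⟧_fin`. -/
def CoSafetyLTLFin (PL : Type) : Set (Set (List (Set PL))) :=
  {Lg | ∃ φ : LTLF PL, CoSafetyLTL φ ∧ Lg = LfinL φ}

/-- `⟦coSafetyLTL\{wX}⟧_fin`. -/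
def CoSafetyLTLnoWFin (PL : Type) : Set (Set (List (Set PL))) :=
  {Lg | ∃ φ : LTLF PL, CoSafetyLTLnoW φ ∧ Lg = LfinL φ}

/-- `⟦SafetyLTL⟧_fin`. -/
def SafetyLTLFin (PL : Type) : Set (Set (List (Set PL))) :=
  {Lg | ∃ φ : LTLF PL, SafetyLTL φ ∧ Lg = LfinL φ}

/-- `⟦SafetyLTL\{X}⟧_fin`. -/
def SafetyLTLnoXFin (PL : Type) : Set (Set (List (Set PL))) :=
  {Lg | ∃ φ : LTLF PL, SafetyLTLnoX φ ∧ Lg = LfinL φ}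

/-- `⟦LTL⟧_fin`. -/
def LTLFin (PL : Type) : Set (Set (List (Set PL))) :=
  {Lg | ∃ φ : LTLF PL, Lg = LfinL φ}

/-- `⟦LTL⟧`. -/
def LTLInf (PL : Type) : Set (Set (ℕ → Set PL)) :=
  {Lg | ∃ φ : LTLF PL, Lg = LinfL φ}

/-- `⟦coSafetyLTL⟧`. -/
def CoSafetyLTLInf (PL : Type) : Set (Set (ℕ → Set PL)) :=
  {Lg | ∃ φ : LTLF PL, CoSafetyLTL φ ∧ Lg = LinfL φ}

/-- `⟦SafetyLTL⟧`. -/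
def SafetyLTLInf (PL : Type) : Set (Set (ℕ → Set PL)) :=
  {Lg | ∃ φ : LTLF PL, SafetyLTL φ ∧ Lg = LinfL φ}

/-- Quantifier-free first-order formulas in one (implicit) variable, i.e.
boolean combinations of the atoms `P(x)`, `x=x`, `x<x`. -/
inductive QF (PL : Type) : Type
  | tru : QF PL
  | fls : QF PL
  | pos : PL → QF PL
  | qnot : QF PL → QF PL
  | qor : QF PL → QF PL → QF PL
  | qand : QF PL → QF PL → QF PL

/-- Evaluation of a quantifier-free one-variable formula at a letter. -/
def QF.sat {PL : Type} (s : Set PL) : QF PL → Prop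
  | .tru => True
  | .fls => False
  | .pos p => p ∈ s
  | .qnot φ => ¬ QF.sat s φ
  | .qor φ ψ => QF.sat s φ ∨ QF.sat s ψ
  | .qand φ ψ => QF.sat s φ ∧ QF.sat s ψ

/-- An ∃-formula with free variables `z₀,…,z_m`:
`∃x₀…∃x_n (x₀<⋯<x_n ∧ z₀=x₀ ∧ ⋀ z_k=x_{i_k} ∧ ⋀ α_j(x_j) ∧ ⋀ ∀y(x_{j−1}<y<x_j → β_j(y)))`. -/
structure ExForm (PL : Type) (m : ℕ) where
  n : ℕ
  bind : Fin m → Fin (n + 1)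
  alpha : Fin (n + 1) → QF PL
  beta : Fin n → QF PL

/-- Satisfaction of an ∃-formula on the word `σ` of length `L` (`⊤` if infinite),
where `z : Fin (m+1) → ℕ` interprets the free variables `z₀,…,z_m`. -/
def ExForm.ESat {PL : Type} {m : ℕ} (e : ExForm PL m) (σ : ℕ → Set PL) (L : ℕ∞)
    (z : Fin (m + 1) → ℕ) : Prop :=
  ∃ x : Fin (e.n + 1) → ℕ,
    StrictMono x ∧
    (∀ j : Fin (e.n + 1), ((x j : ℕ) : ℕ∞) < L) ∧
    z 0 = x 0 ∧
    (∀ k : Fin m, z k.succ = x (e.bind k)) ∧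
    (∀ j : Fin (e.n + 1), (e.alpha j).sat (σ (x j))) ∧
    (∀ j : Fin e.n, ∀ y : ℕ, x j.castSucc < y → y < x j.succ → (e.beta j).sat (σ y))

/-- Satisfaction of a disjunction of ∃-formulas. -/
def DisjESat {PL : Type} {m : ℕ} (ds : List (ExForm PL m)) (σ : ℕ → Set PL) (L : ℕ∞)
    (z : Fin (m + 1) → ℕ) : Prop :=
  ∃ e ∈ ds, ExForm.ESat e σ L z

/-- Size (number of symbols) of an LTL formula. -/
def LTLF.size {PL : Type} : LTLF PL → ℕ
  | .pos _ => 1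
  | .nneg _ => 2
  | .disj φ ψ => φ.size + ψ.size + 1
  | .conj φ ψ => φ.size + ψ.size + 1
  | .next φ => φ.size + 1
  | .wnext φ => φ.size + 1
  | .untl φ ψ => φ.size + ψ.size + 1
  | .rel φ ψ => φ.size + ψ.size + 1

/-- Size (number of symbols) of a first-order formula. -/
def FOW.size {PL : Type} : FOW PL → ℕ
  | .lt _ _ => 3
  | .eq _ _ => 3
  | .pred _ _ => 2
  | .not φ => φ.size + 1
  | .disj φ ψ => φ.size + ψ.size + 1
  | .conj φ ψ => φ.size + ψ.size + 1
  | .ex _ φ => φ.size + 2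
  | .all _ φ => φ.size + 2

/-- Bounded formulas relative to a variable `x`: every quantifier is of the form
`∃y(y ≤ x ∧ …)` or `∀y(y ≤ x → …)`. -/
inductive BoundedBy {PL : Type} (x : ℕ) : FOW PL → Prop
  | lt (a b : ℕ) : BoundedBy x (.lt a b)
  | eq (a b : ℕ) : BoundedBy x (.eq a b)
  | pred (p : PL) (a : ℕ) : BoundedBy x (.pred p a)
  | not {φ : FOW PL} : BoundedBy x φ → BoundedBy x (.not φ)
  | disj {φ ψ : FOW PL} : BoundedBy x φ → BoundedBy x ψ → BoundedBy x (.disj φ ψ)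
  | conj {φ ψ : FOW PL} : BoundedBy x φ → BoundedBy x ψ → BoundedBy x (.conj φ ψ)
  | ex (y : ℕ) {φ : FOW PL} : BoundedBy x φ →
      BoundedBy x (.ex y (.conj (FOW.le y x) φ))
  | all (y : ℕ) {φ : FOW PL} : BoundedBy x φ →
      BoundedBy x (.all y (FOW.impl (FOW.le y x) φ))

/-- EBFO sentences: `∃x.φ(x)` with `φ(x)` bounded and with exactly one free variable `x`. -/
def IsEBFO {PL : Type} (ψ : FOW PL) : Prop :=
  ∃ (x : ℕ) (φ : FOW PL), ψ = .ex x φ ∧ BoundedBy x φ ∧ φ.free = {x}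

/-- The ω-language of a sentence (the valuation is irrelevant). -/
def LinfSent {PL : Type} (ψ : FOW PL) : Set (ℕ → Set PL) :=
  {σ | FOSat σ ⊤ ψ (fun _ => 0)}

section Translation

variable {PL : Type}

namespace FOW

def vars : FOW PL → Finset ℕ
  | .lt a b => {a, b}
  | .eq a b => {a, b}
  | .pred _ a => {a}
  | .not φ => φ.vars
  | .disj φ ψ => φ.vars ∪ ψ.vars
  | .conj φ ψ => φ.vars ∪ ψ.vars
  | .ex y φ => insert y φ.vars
  | .all y φ => insert y φ.vars

theorem free_subset_vars (φ : FOW PL) : φ.free ⊆ φ.vars := by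
  induction φ with
  | lt | eq | pred => exact subset_rfl
  | not φ ih => exact ih
  | disj φ ψ ih₁ ih₂ | conj φ ψ ih₁ ih₂ => exact Finset.union_subset_union ih₁ ih₂
  | ex y φ ih | all y φ ih =>
      exact (Finset.erase_subset _ _).trans (ih.trans (Finset.subset_insert _ _))

theorem one_le_size (φ : FOW PL) : 1 ≤ φ.size := by
  cases φ <;> simp only [size] <;> omega

def relativize (x : ℕ) : FOW PL → FOW PL
  | .lt a b => .lt a b
  | .eq a b => .eq a b
  | .pred p a => .pred p a
  | .not φ => .not (φ.relativize x)
  | .disj φ ψ => .disj (φ.relativize x) (ψ.relativize x)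
  | .conj φ ψ => .conj (φ.relativize x) (ψ.relativize x)
  | .ex y φ => .ex y (.conj (le y x) (φ.relativize x))
  | .all y φ => .all y (impl (le y x) (φ.relativize x))

theorem boundedBy_relativize (x : ℕ) (φ : FOW PL) : BoundedBy x (φ.relativize x) := by
  induction φ with
  | lt a b => exact .lt a b
  | eq a b => exact .eq a b
  | pred p a => exact .pred p a
  | not φ ih => exact .not ih
  | disj φ ψ ih₁ ih₂ => exact .disj ih₁ ih₂
  | conj φ ψ ih₁ ih₂ => exact .conj ih₁ ih₂
  | ex y φ ih => exact .ex y ih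
  | all y φ ih => exact .all y ih

theorem free_relativize_subset (x : ℕ) (φ : FOW PL) :
    (φ.relativize x).free ⊆ insert x φ.free := by
  intro a ha
  induction φ with
  | lt | eq | pred => exact Finset.mem_insert_of_mem ha
  | not φ ih => exact ih ha
  | disj φ ψ ih₁ ih₂ | conj φ ψ ih₁ ih₂ =>
      simp only [relativize, free, Finset.mem_union, Finset.mem_insert] at ha ih₁ ih₂ ⊢
      tauto
  | ex y φ ih | all y φ ih =>
      simp only [relativize, free, le, impl, Finset.mem_erase, Finset.mem_union,
        Finset.mem_insert, Finset.mem_singleton] at ha ih ⊢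
      tauto

theorem size_relativize_le (x : ℕ) (φ : FOW PL) : (φ.relativize x).size ≤ 6 * φ.size := by
  induction φ with
  | lt | eq | pred => simp [relativize, size]
  | not φ ih => simp only [relativize, size]; omega
  | disj φ ψ ih₁ ih₂ | conj φ ψ ih₁ ih₂ => simp only [relativize, size]; omega
  | ex y φ ih | all y φ ih => simp only [relativize, size, le, impl]; omega

end FOW

open FOW Filter

section Satisfaction

variable {σ : ℕ → Set PL} {L : ℕ∞}

@[simp]
theorem foSat_le (y x : ℕ) (v : ℕ → ℕ) : FOSat σ L (FOW.le y x : FOW PL) v ↔ v y ≤ v x := by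
  simp only [FOW.le, FOSat]; omega

@[simp]
theorem foSat_impl (φ ψ : FOW PL) (v : ℕ → ℕ) :
    FOSat σ L (impl φ ψ) v ↔ (FOSat σ L φ v → FOSat σ L ψ v) := by
  simp only [impl, FOSat]; tauto

theorem update_eqOn_of_eqOn_erase {s : Finset ℕ} {v w : ℕ → ℕ} {y : ℕ}
    (h : ∀ u ∈ s.erase y, v u = w u) (n : ℕ) :
    ∀ u ∈ s, Function.update v y n u = Function.update w y n u := by
  intro u hu
  rcases eq_or_ne u y with rfl | hne
  · simp
  · simpa [Function.update_of_ne hne] using h u (Finset.mem_erase.2 ⟨hne, hu⟩)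

theorem foSat_congr (φ : FOW PL) {v w : ℕ → ℕ} (h : ∀ u ∈ φ.free, v u = w u) :
    FOSat σ L φ v ↔ FOSat σ L φ w := by
  induction φ generalizing v w with
  | lt a b | eq a b => simp [FOSat, h a (by simp [free]), h b (by simp [free])]
  | pred p a => simp [FOSat, h a (by simp [free])]
  | not φ ih => exact not_congr (ih h)
  | disj φ ψ ih₁ ih₂ =>
      exact or_congr (ih₁ fun u hu => h u (by simp [free, hu]))
        (ih₂ fun u hu => h u (by simp [free, hu]))
  | conj φ ψ ih₁ ih₂ =>
      exact and_congr (ih₁ fun u hu => h u (by simp [free, hu]))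
        (ih₂ fun u hu => h u (by simp [free, hu]))
  | ex y φ ih =>
      exact exists_congr fun n => and_congr_right fun _ => ih (update_eqOn_of_eqOn_erase h n)
  | all y φ ih =>
      exact forall_congr' fun n => imp_congr_right fun _ => ih (update_eqOn_of_eqOn_erase h n)

theorem foSat_update_of_notMem_free {φ : FOW PL} {x : ℕ} (hx : x ∉ φ.free) (v : ℕ → ℕ)
    (b : ℕ) : FOSat σ L φ (Function.update v x b) ↔ FOSat σ L φ v :=
  foSat_congr φ fun _ hu => Function.update_of_ne (by rintro rfl; exact hx hu) _ _

end Satisfaction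

theorem foSat_relativize_iff {σ : ℕ → Set PL} {x : ℕ} {φ : FOW PL} (hx : x ∉ φ.vars)
    (w : ℕ → ℕ) : FOSat σ ⊤ (φ.relativize x) w ↔ FOSat σ ((w x + 1 : ℕ) : ℕ∞) φ w := by
  induction φ generalizing w with
  | lt | eq | pred => rfl
  | not φ ih => exact not_congr (ih hx w)
  | disj φ ψ ih₁ ih₂ =>
      simp only [vars, Finset.mem_union, not_or] at hx
      exact or_congr (ih₁ hx.1 w) (ih₂ hx.2 w)
  | conj φ ψ ih₁ ih₂ =>
      simp only [vars, Finset.mem_union, not_or] at hx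
      exact and_congr (ih₁ hx.1 w) (ih₂ hx.2 w)
  | ex y φ ih | all y φ ih =>
      simp only [vars, Finset.mem_insert, not_or] at hx
      have hw (n : ℕ) : Function.update w y n x = w x := Function.update_of_ne hx.1 _ _
      simp only [relativize, FOSat, foSat_le, foSat_impl, ih hx.2, hw, Function.update_self,
        ENat.natCast_lt_top, true_and, forall_const, Nat.cast_lt, Nat.lt_succ_iff]

theorem update_lt_of_forall_lt {w : ℕ → ℕ} {L n : ℕ} (hw : ∀ u, w u < L) (hn : n < L)
    (y : ℕ) : ∀ u, Function.update w y n u < L :=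
  (Function.forall_update_iff w (a := y) fun _ m => m < L).2 ⟨hn, fun u _ => hw u⟩

theorem lt_of_update_lt_update {w : ℕ → ℕ} {y z n : ℕ}
    (h : Function.update w y n y < Function.update w y n z) : n < w z := by
  rcases eq_or_ne z y with rfl | hzy
  · simp at h
  · simpa [Function.update_of_ne hzy] using h

namespace CoSafetyFO

variable {σ : ℕ → Set PL}

theorem foSat_top_of_foSat {φ : FOW PL} (hφ : CoSafetyFO φ) {L : ℕ} {w : ℕ → ℕ}
    (hw : ∀ u, w u < L) (h : FOSat σ L φ w) : FOSat σ ⊤ φ w := by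
  induction hφ generalizing w with
  | lt | eq | ne | pred | npred => exact h
  | disj _ _ ih₁ ih₂ => exact h.imp (ih₁ hw) (ih₂ hw)
  | conj _ _ ih₁ ih₂ => exact h.imp (ih₁ hw) (ih₂ hw)
  | ex a y _ ih =>
      obtain ⟨n, hn, ha, hχ⟩ := h
      exact ⟨n, ENat.natCast_lt_top n, ha,
        ih (update_lt_of_forall_lt hw (by exact_mod_cast hn) y) hχ⟩
  | all a y z _ ih =>
      intro n _
      rw [foSat_impl]
      intro hg
      have hn : n < L := (lt_of_update_lt_update hg.2).trans (hw z)
      exact ih (update_lt_of_forall_lt hw hn y)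
        ((foSat_impl _ _ _).1 (h n (by exact_mod_cast hn)) hg)

theorem eventually_foSat {φ : FOW PL} (hφ : CoSafetyFO φ) {w : ℕ → ℕ}
    (h : FOSat σ ⊤ φ w) : ∀ᶠ L : ℕ in atTop, FOSat σ L φ w := by
  induction hφ generalizing w with
  | lt | eq | ne | pred | npred => exact .of_forall fun _ => h
  | disj _ _ ih₁ ih₂ =>
      rcases h with h | h
      · exact (ih₁ h).mono fun _ => Or.inl
      · exact (ih₂ h).mono fun _ => Or.inr
  | conj _ _ ih₁ ih₂ => exact (ih₁ h.1).and (ih₂ h.2)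
  | ex a y _ ih =>
      obtain ⟨n, -, ha, hχ⟩ := h
      exact ((ih hχ).and (eventually_gt_atTop n)).mono fun L hL =>
        ⟨n, by exact_mod_cast hL.2, ha, hL.1⟩
  | @all a y z χ _ ih =>
      have hbelow : ∀ n ∈ Finset.range (w z), ∀ᶠ L : ℕ in atTop,
          FOSat σ L (impl (.conj (.lt a y) (.lt y z)) χ) (Function.update w y n) := by
        intro n _
        by_cases hg : FOSat σ ⊤ (.conj (.lt a y) (.lt y z) : FOW PL) (Function.update w y n)
        · exact (ih ((foSat_impl _ _ _).1 (h n (ENat.natCast_lt_top n)) hg)).mono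
            fun _ hL => (foSat_impl _ _ _).2 fun _ => hL
        · exact .of_forall fun _ => (foSat_impl _ _ _).2 fun hg' => absurd hg' hg
      refine ((eventually_all_finset _).2 hbelow).mono fun L hL n _ => ?_
      rw [foSat_impl]
      intro hg
      exact (foSat_impl _ _ _).1 (hL n (Finset.mem_range.2 (lt_of_update_lt_update hg.2))) hg

theorem foSat_top_iff_exists_nat {φ : FOW PL} (hφ : CoSafetyFO φ) :
    FOSat σ ⊤ φ (fun _ => 0) ↔ ∃ b : ℕ, FOSat σ ((b + 1 : ℕ) : ℕ∞) φ (fun _ => 0) := by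
  constructor
  · intro h
    obtain ⟨L₀, hL₀⟩ := eventually_atTop.1 (hφ.eventually_foSat h)
    exact ⟨L₀, hL₀ (L₀ + 1) (Nat.le_succ L₀)⟩
  · rintro ⟨b, hb⟩
    exact hφ.foSat_top_of_foSat (fun _ => Nat.succ_pos b) hb

end CoSafetyFO

/-- The middle conjunct forces `z = 0`; this is how the free variable `z` of `φ` gets bound. -/
def toEBFO (φ : FOW PL) (x z y : ℕ) : FOW PL :=
  .ex x (.ex z (.conj (FOW.le z x)
    (.conj (.all y (impl (FOW.le y x) (FOW.le z y))) (φ.relativize x))))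

theorem isEBFO_toEBFO {φ : FOW PL} {x z : ℕ} (hφ : φ.free = {z}) (hzx : z ≠ x) (y : ℕ) :
    IsEBFO (toEBFO φ x z y) := by
  refine ⟨x, _, rfl,
    .ex z (.conj (.all y (.disj (.lt z y) (.eq z y))) (boundedBy_relativize x φ)), ?_⟩
  have hrel : ∀ a ∈ (φ.relativize x).free, a = x ∨ a = z := fun a ha => by
    simpa [hφ] using free_relativize_subset x φ ha
  ext a
  simp only [free, FOW.le, impl, Finset.mem_erase, Finset.mem_union, Finset.mem_insert,
    Finset.mem_singleton]
  have := hrel a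
  constructor
  · tauto
  · rintro rfl
    exact ⟨hzx.symm, by tauto⟩

theorem size_toEBFO_le (φ : FOW PL) (x z y : ℕ) : (toEBFO φ x z y).size ≤ 37 * φ.size := by
  have := size_relativize_le x φ
  have := one_le_size φ
  simp only [toEBFO, size, FOW.le, impl]
  omega

theorem foSat_toEBFO_iff {σ : ℕ → Set PL} {φ : FOW PL} {x z y : ℕ} (hzx : z ≠ x)
    (hyx : y ≠ x) (hyz : y ≠ z) :
    FOSat σ ⊤ (toEBFO φ x z y) (fun _ => 0) ↔
      ∃ b : ℕ, FOSat σ ⊤ (φ.relativize x) (Function.update (fun _ => 0) x b) := by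
  have hz0 (b : ℕ) : Function.update (Function.update (fun _ => 0) x b) z 0 =
      Function.update (fun _ => 0) x b :=
    Function.update_eq_self_iff.2 (Function.update_of_ne hzx b fun _ => 0).symm
  simp only [toEBFO, FOSat, foSat_le, foSat_impl, ENat.natCast_lt_top, true_and, forall_const,
    Function.update_self, Function.update_of_ne hyx.symm, Function.update_of_ne hyz.symm,
    Function.update_of_ne hzx.symm]
  refine exists_congr fun b => ⟨?_, fun h => ⟨0, Nat.zero_le b, fun _ _ => Nat.zero_le _, ?_⟩⟩
  · rintro ⟨m, -, hmin, h⟩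
    obtain rfl : m = 0 := Nat.le_zero.1 (hmin 0 (Nat.zero_le b))
    rwa [hz0] at h
  · rwa [hz0]

end Translation

end CoSafetyPaper

open CoSafetyPaper in
theorem cosafetyFO_to_EBFO_linear_general (PL : Type) :
    ∃ C : ℕ, 0 < C ∧ ∀ φ : FOW PL, CoSafetyFO φ → HasOneFree φ →
      ∃ ψ : FOW PL, IsEBFO ψ ∧ LinfFO φ = LinfSent ψ ∧
        FOW.size ψ ≤ C * FOW.size φ := by
  refine ⟨37, by norm_num, fun φ hφ ⟨z, hz⟩ => ?_⟩
  obtain ⟨x, hx⟩ := Infinite.exists_notMem_finset φ.vars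
  obtain ⟨y, hy⟩ := Infinite.exists_notMem_finset ({x, z} : Finset ℕ)
  have hzx : z ≠ x := fun h => hx (h ▸ φ.free_subset_vars (hz ▸ Finset.mem_singleton_self z))
  have hx_free : x ∉ φ.free := by simpa [hz] using hzx.symm
  simp only [Finset.mem_insert, Finset.mem_singleton, not_or] at hy
  refine ⟨toEBFO φ x z y, isEBFO_toEBFO hz hzx y, ?_, size_toEBFO_le φ x z y⟩
  ext σ
  simp only [LinfFO, LinfSent, Set.mem_ofPred_eq, foSat_toEBFO_iff hzx hy.1 hy.2,
    foSat_relativize_iff hx, Function.update_self, foSat_update_of_notMem_free hx_free]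
  exact hφ.foSat_top_iff_exists_nat

open CoSafetyPaper in
/-- There is a linear-size translation from coSafetyFO formulas
with exactly one free variable to EBFO sentences, preserving the ω-language. -/
theorem cosafetyFO_to_EBFO_linear (PL : Type) [Fintype PL] :
    ∃ C : ℕ, 0 < C ∧ ∀ φ : FOW PL, CoSafetyFO φ → HasOneFree φ →
      ∃ ψ : FOW PL, IsEBFO ψ ∧ LinfFO φ = LinfSent ψ ∧
        FOW.size ψ ≤ C * FOW.size φ :=
  cosafetyFO_to_EBFO_linear_general PL
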